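/- Let λ > μ > 0. For every z ≥ 1, sup{ sz − Λ(s;λ,μ) : s ≤ s*(λ,μ) } = (1/2)·(√((z−1)λ) − √((z+1)μ))², while for every z < 1 the set { sz − Λ(s;λ,μ) : s ≤ s*(λ,μ) } is not bounded above (the supremum is +∞). Moreover, for every z ∈ ℝ, sup{ sz − Λ(s;λ,μ) : s < s*(λ,μ) } = sup{ sz − Λ(s;λ,μ) : s ≤ s*(λ,μ) }. -/
import Mathlib


open MeasureTheory Filter

/-- `s*(λ,μ) = (√λ − √μ)²/2`. -/
noncomputable def sStar (l m : ℝ) : ℝ := (Real.sqrt l - Real.sqrt m) ^ 2 / 2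

/-- `Λ(s;λ,μ)`. -/
noncomputable def Lam (s l m : ℝ) : ℝ :=
  (l - m - Real.sqrt ((l + m - 2 * s) ^ 2 - 4 * l * m)) / 2

set_option maxHeartbeats 800000

lemma aux_base (l m : ℝ) (hlm : m < l) (hm : 0 < m) {s : ℝ} (hs : s ≤ sStar l m) :
    2 * Real.sqrt (l * m) ≤ l + m - 2 * s ∧ 0 ≤ (l + m - 2 * s) ^ 2 - 4 * l * m := by
  have hl : 0 < l := hm.trans hlm
  have h1 : Real.sqrt l ^ 2 = l := Real.sq_sqrt hl.le
  have h2 : Real.sqrt m ^ 2 = m := Real.sq_sqrt hm.le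
  have h3 : Real.sqrt (l * m) = Real.sqrt l * Real.sqrt m := Real.sqrt_mul hl.le m
  have h4 : 0 ≤ Real.sqrt (l * m) := Real.sqrt_nonneg _
  unfold sStar at hs
  constructor
  · nlinarith
  · nlinarith

lemma Lam_le (s l m : ℝ) : Lam s l m ≤ (l - m) / 2 := by
  unfold Lam
  have := Real.sqrt_nonneg ((l + m - 2 * s) ^ 2 - 4 * l * m)
  linarith

lemma upper (l m : ℝ) (hlm : m < l) (hm : 0 < m) {z : ℝ} (hz : 1 ≤ z)
    {s : ℝ} (hs : s ≤ sStar l m) :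
    s * z - Lam s l m ≤ 1 / 2 * (Real.sqrt ((z - 1) * l) - Real.sqrt ((z + 1) * m)) ^ 2 := by
  have hl : 0 < l := hm.trans hlm
  obtain ⟨hu, hD⟩ := aux_base l m hlm hm hs
  simp only [Lam]
  set r := Real.sqrt ((l + m - 2 * s) ^ 2 - 4 * l * m) with hrdef
  have hr0 : 0 ≤ r := Real.sqrt_nonneg _
  have hr2 : r ^ 2 = (l + m - 2 * s) ^ 2 - 4 * l * m := Real.sq_sqrt hD
  set a := Real.sqrt ((z - 1) * l) with hadef
  set b := Real.sqrt ((z + 1) * m) with hbdef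
  have ha0 : 0 ≤ a := Real.sqrt_nonneg _
  have hb0 : 0 ≤ b := Real.sqrt_nonneg _
  have ha2 : a ^ 2 = (z - 1) * l := Real.sq_sqrt (by nlinarith)
  have hb2 : b ^ 2 = (z + 1) * m := Real.sq_sqrt (by nlinarith)
  have hc2 : (a * b) ^ 2 = (z ^ 2 - 1) * (l * m) := by rw [mul_pow, ha2, hb2]; ring
  have hslm : 0 ≤ l + m - 2 * s := le_trans (by positivity) hu
  have hQ : 0 < (z ^ 2 - 1) * r ^ 2 + 4 * (l * m) + 4 * (a * b) * r := by
    have : 0 ≤ (z ^ 2 - 1) * r ^ 2 :=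
      mul_nonneg (by nlinarith) (sq_nonneg r)
    have : 0 ≤ (a * b) * r := mul_nonneg (mul_nonneg ha0 hb0) hr0
    nlinarith [mul_pos hl hm]
  have hP : 4 * (a * b) * r ≤ (z ^ 2 - 1) * r ^ 2 + 4 * (l * m) := by
    nlinarith [hQ, sq_nonneg ((z ^ 2 - 1) * r ^ 2 - 4 * (l * m)), hc2]
  have hsq : (r + 2 * (a * b)) ^ 2 ≤ (z * (l + m - 2 * s)) ^ 2 := by
    nlinarith [hP, hc2, hr2]
  have hkey : r + 2 * (a * b) ≤ z * (l + m - 2 * s) := by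
    have h1 := Real.sqrt_le_sqrt hsq
    rwa [Real.sqrt_sq (by positivity), Real.sqrt_sq (by positivity)] at h1
  nlinarith [hkey, ha2, hb2]

lemma lower_gt (l m : ℝ) (hlm : m < l) (hm : 0 < m) {z : ℝ} (hz : 1 < z) :
    ∃ s ≤ sStar l m, s * z - Lam s l m
      = 1 / 2 * (Real.sqrt ((z - 1) * l) - Real.sqrt ((z + 1) * m)) ^ 2 := by
  have hl : 0 < l := hm.trans hlm
  set w := Real.sqrt (z ^ 2 - 1) with hwdef
  have hw0 : 0 < w := Real.sqrt_pos.2 (by nlinarith)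
  have hw2 : w ^ 2 = z ^ 2 - 1 := Real.sq_sqrt (by nlinarith)
  set c := Real.sqrt (l * m) with hcdef
  have hc0 : 0 < c := Real.sqrt_pos.2 (by positivity)
  have hc2 : c ^ 2 = l * m := Real.sq_sqrt (by positivity)
  have hzw : w ≤ z := by nlinarith
  refine ⟨(l + m - 2 * z * c / w) / 2, ?_, ?_⟩
  · have h1 : Real.sqrt l ^ 2 = l := Real.sq_sqrt hl.le
    have h2 : Real.sqrt m ^ 2 = m := Real.sq_sqrt hm.le
    have h3 : c = Real.sqrt l * Real.sqrt m := Real.sqrt_mul hl.le m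
    have h4 : 2 * c ≤ 2 * z * c / w := by
      rw [le_div_iff₀ hw0]; nlinarith
    unfold sStar; nlinarith
  · have hu : l + m - 2 * ((l + m - 2 * z * c / w) / 2) = 2 * z * c / w := by ring
    have hD : (l + m - 2 * ((l + m - 2 * z * c / w) / 2)) ^ 2 - 4 * l * m
        = (2 * c / w) ^ 2 := by
      rw [hu]; field_simp; nlinarith [hw2, hc2]
    have hrs : Real.sqrt ((l + m - 2 * ((l + m - 2 * z * c / w) / 2)) ^ 2 - 4 * l * m)
        = 2 * c / w := by
      rw [hD, Real.sqrt_sq (by positivity)]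
    set a := Real.sqrt ((z - 1) * l) with hadef
    set b := Real.sqrt ((z + 1) * m) with hbdef
    have hab : a * b = w * c := by
      rw [hadef, hbdef, ← Real.sqrt_mul (by nlinarith : (0:ℝ) ≤ (z - 1) * l),
        hwdef, hcdef, ← Real.sqrt_mul (by nlinarith : (0:ℝ) ≤ z ^ 2 - 1)]
      congr 1; ring
    have ha2 : a ^ 2 = (z - 1) * l := Real.sq_sqrt (by nlinarith)
    have hb2 : b ^ 2 = (z + 1) * m := Real.sq_sqrt (by nlinarith)
    unfold Lam
    rw [hrs]
    have hexp : 1 / 2 * (a - b) ^ 2 = ((z - 1) * l + (z + 1) * m) / 2 - w * c := by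
      linear_combination ha2 / 2 + hb2 / 2 - hab
    rw [hexp]
    field_simp
    nlinarith [hw2, hw0]

lemma lower_one (l m : ℝ) (hlm : m < l) (hm : 0 < m) {b : ℝ} (hb : b < m) :
    ∃ s ≤ sStar l m, b < s * 1 - Lam s l m := by
  have hl : 0 < l := hm.trans hlm
  set ε := m - b with hεdef
  have hε : 0 < ε := by rw [hεdef]; linarith
  set s := min (sStar l m) ((l + m) / 2 - 2 * l * m / ε - ε / 2) with hsdef
  have hs1 : s ≤ sStar l m := min_le_left _ _
  refine ⟨s, hs1, ?_⟩
  obtain ⟨hu0, hD⟩ := aux_base l m hlm hm hs1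
  have hu0' : 0 ≤ l + m - 2 * s := le_trans (by positivity) hu0
  have hA : 4 * l * m / ε + ε ≤ l + m - 2 * s := by
    have h2 := min_le_right (sStar l m) ((l + m) / 2 - 2 * l * m / ε - ε / 2)
    rw [← hsdef] at h2
    have h3 : 4 * l * m / ε = 2 * (2 * l * m / ε) := by ring
    linarith
  have huε : 4 * l * m + ε ^ 2 ≤ (l + m - 2 * s) * ε := by
    nlinarith [div_mul_cancel₀ (4 * l * m) hε.ne', hA, hε]
  simp only [Lam]
  set r := Real.sqrt ((l + m - 2 * s) ^ 2 - 4 * l * m) with hrdef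
  have hr0 : 0 ≤ r := Real.sqrt_nonneg _
  have hr2 : r ^ 2 = (l + m - 2 * s) ^ 2 - 4 * l * m := Real.sq_sqrt hD
  have hkey : l + m - 2 * s - ε ≤ r := by
    rcases le_or_gt (l + m - 2 * s - ε) 0 with h | h
    · linarith
    · have hsq : (l + m - 2 * s - ε) ^ 2 ≤ (l + m - 2 * s) ^ 2 - 4 * l * m := by
        nlinarith [mul_pos hl hm]
      calc l + m - 2 * s - ε = Real.sqrt ((l + m - 2 * s - ε) ^ 2) :=
            (Real.sqrt_sq h.le).symm
        _ ≤ r := Real.sqrt_le_sqrt hsq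
  have hεb : ε = m - b := hεdef
  linarith

lemma lower_lt (l m : ℝ) (hlm : m < l) (hm : 0 < m) {z : ℝ} (hz : z < 1) (M : ℝ) :
    ∃ s ≤ sStar l m, M < s * z - Lam s l m := by
  have hl : 0 < l := hm.trans hlm
  set c := Real.sqrt (l * m) with hcdef
  have hc0 : 0 ≤ c := Real.sqrt_nonneg _
  set s := min (sStar l m) ((M - m + c) / (z - 1) - 1) with hsdef
  have hs1 : s ≤ sStar l m := min_le_left _ _
  refine ⟨s, hs1, ?_⟩
  obtain ⟨hu0, hD⟩ := aux_base l m hlm hm hs1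
  have hu0' : 0 ≤ l + m - 2 * s := le_trans (by positivity) hu0
  -- Lam s l m ≤ s - m + c
  have hLam : Lam s l m ≤ s - m + c := by
    simp only [Lam]
    have hsq : (l + m - 2 * s - 2 * c) ^ 2 ≤ (l + m - 2 * s) ^ 2 - 4 * l * m := by
      have hc2 : c ^ 2 = l * m := Real.sq_sqrt (by positivity)
      nlinarith [hu0, hc0]
    have h1 : l + m - 2 * s - 2 * c ≤ Real.sqrt ((l + m - 2 * s) ^ 2 - 4 * l * m) := by
      rcases le_or_gt (l + m - 2 * s - 2 * c) 0 with h | h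
      · exact h.trans (Real.sqrt_nonneg _)
      · calc l + m - 2 * s - 2 * c = Real.sqrt ((l + m - 2 * s - 2 * c) ^ 2) :=
              (Real.sqrt_sq h.le).symm
          _ ≤ _ := Real.sqrt_le_sqrt hsq
    linarith
  have hs2 : s < (M - m + c) / (z - 1) := by
    have := min_le_right (sStar l m) ((M - m + c) / (z - 1) - 1)
    rw [← hsdef] at this; linarith
  have hmul : M - m + c < s * (z - 1) := by
    have hz1 : z - 1 < 0 := by linarith
    exact (lt_div_iff_of_neg hz1).mp hs2
  have : M < s * z - (s - m + c) := by nlinarith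
  linarith

lemma Lam_sStar (l m : ℝ) (hlm : m < l) (hm : 0 < m) :
    Lam (sStar l m) l m = (l - m) / 2 := by
  have hl : 0 < l := hm.trans hlm
  have h1 : Real.sqrt l ^ 2 = l := Real.sq_sqrt hl.le
  have h2 : Real.sqrt m ^ 2 = m := Real.sq_sqrt hm.le
  have hD : (l + m - 2 * sStar l m) ^ 2 - 4 * l * m = 0 := by
    unfold sStar; nlinarith [h1, h2]
  simp only [Lam, hD, Real.sqrt_zero, sub_zero]

lemma near_star (l m : ℝ) (hlm : m < l) (hm : 0 < m) (z : ℝ) {b : ℝ}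
    (hb : b < sStar l m * z - Lam (sStar l m) l m) :
    ∃ s < sStar l m, b < s * z - Lam s l m := by
  rw [Lam_sStar l m hlm hm] at hb
  set δ := (sStar l m * z - (l - m) / 2 - b) / (|z| + 1) with hδdef
  have habs : 0 ≤ |z| := abs_nonneg z
  have hδ : 0 < δ := by
    apply div_pos (by linarith) (by linarith)
  refine ⟨sStar l m - δ, by linarith, ?_⟩
  have hL := Lam_le (sStar l m - δ) l m
  have hzabs : δ * z ≤ δ * |z| := mul_le_mul_of_nonneg_left (le_abs_self z) hδ.le
  have hmul : δ * (|z| + 1) = sStar l m * z - (l - m) / 2 - b :=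
    div_mul_cancel₀ _ (by linarith)
  nlinarith [hL, hzabs, hmul, hδ]

/-- the restricted Legendre transform
`H_A(z;λ,μ) = sup{sz − Λ(s;λ,μ) : s ≤ s*(λ,μ)}` equals
`(1/2)(√((z−1)λ) − √((z+1)μ))²` for `z ≥ 1` and `+∞` for `z < 1`; moreover the sup over
`s < s*(λ,μ)` coincides with the sup over `s ≤ s*(λ,μ)` (suprema taken in `EReal`). -/
theorem legendre_transform_Lam (l m : ℝ) (hlm : m < l) (hm : 0 < m) :
    (∀ z : ℝ, 1 ≤ z →
      (⨆ s : {s : ℝ // s ≤ sStar l m}, ((s.1 * z - Lam s.1 l m : ℝ) : EReal))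
        = ((1 / 2 * (Real.sqrt ((z - 1) * l) - Real.sqrt ((z + 1) * m)) ^ 2 : ℝ) : EReal))
    ∧ (∀ z : ℝ, z < 1 →
      (⨆ s : {s : ℝ // s ≤ sStar l m}, ((s.1 * z - Lam s.1 l m : ℝ) : EReal)) = ⊤
        ∧ ¬ BddAbove {y : ℝ | ∃ s ≤ sStar l m, y = s * z - Lam s l m})
    ∧ (∀ z : ℝ,
      (⨆ s : {s : ℝ // s < sStar l m}, ((s.1 * z - Lam s.1 l m : ℝ) : EReal))
        = ⨆ s : {s : ℝ // s ≤ sStar l m}, ((s.1 * z - Lam s.1 l m : ℝ) : EReal)) := by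
  have hl : 0 < l := hm.trans hlm
  refine ⟨?_, ?_, ?_⟩
  · -- z ≥ 1
    intro z hz
    apply le_antisymm
    · exact iSup_le fun s => EReal.coe_le_coe_iff.2 (upper l m hlm hm hz s.2)
    · rcases eq_or_lt_of_le hz with h1 | h1
      · -- z = 1
        subst h1
        have hval : 1 / 2 * (Real.sqrt ((1 - 1) * l) - Real.sqrt ((1 + 1) * m)) ^ 2 = m := by
          have h0 : ((1:ℝ) - 1) * l = 0 := by ring
          have h2m : Real.sqrt ((1 + 1) * m) ^ 2 = (1 + 1) * m := Real.sq_sqrt (by linarith)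
          rw [h0, Real.sqrt_zero]
          linear_combination h2m / 2
        rw [hval]
        refine le_of_forall_lt fun x hx => ?_
        induction x using EReal.rec with
        | bot =>
            refine lt_of_lt_of_le (EReal.bot_lt_coe (sStar l m * 1 - Lam (sStar l m) l m)) ?_
            exact le_iSup (fun s : {s : ℝ // s ≤ sStar l m} =>
              ((s.1 * 1 - Lam s.1 l m : ℝ) : EReal)) ⟨sStar l m, le_refl _⟩
        | coe b =>
            have hb : b < m := EReal.coe_lt_coe_iff.mp hx
            obtain ⟨s, hs, hgt⟩ := lower_one l m hlm hm hb
            refine lt_of_lt_of_le (EReal.coe_lt_coe_iff.2 hgt) ?_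
            exact le_iSup (fun s : {s : ℝ // s ≤ sStar l m} =>
              ((s.1 * 1 - Lam s.1 l m : ℝ) : EReal)) ⟨s, hs⟩
        | top => exact absurd hx (by simp)
      · -- z > 1
        obtain ⟨s, hs, heq⟩ := lower_gt l m hlm hm h1
        rw [← heq]
        exact le_iSup (fun s : {s : ℝ // s ≤ sStar l m} =>
          ((s.1 * z - Lam s.1 l m : ℝ) : EReal)) ⟨s, hs⟩
  · -- z < 1
    intro z hz
    constructor
    · rw [iSup_eq_top]
      intro b hb
      induction b using EReal.rec with
      | bot => exact ⟨⟨sStar l m, le_refl _⟩, EReal.bot_lt_coe _⟩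
      | coe M =>
          obtain ⟨s, hs, h⟩ := lower_lt l m hlm hm hz M
          exact ⟨⟨s, hs⟩, EReal.coe_lt_coe_iff.2 h⟩
      | top => exact absurd hb (lt_irrefl _)
    · rintro ⟨M, hM⟩
      obtain ⟨s, hs, h⟩ := lower_lt l m hlm hm hz M
      have hle : s * z - Lam s l m ≤ M := hM ⟨s, hs, rfl⟩
      linarith
  · -- sup over < equals sup over ≤
    intro z
    apply le_antisymm
    · exact iSup_le fun s => le_iSup (fun t : {s : ℝ // s ≤ sStar l m} =>
        ((t.1 * z - Lam t.1 l m : ℝ) : EReal)) ⟨s.1, s.2.le⟩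
    · apply iSup_le
      rintro ⟨s, hs⟩
      rcases lt_or_eq_of_le hs with h | h
      · exact le_iSup (fun t : {s : ℝ // s < sStar l m} =>
          ((t.1 * z - Lam t.1 l m : ℝ) : EReal)) ⟨s, h⟩
      · subst h
        refine le_of_forall_lt fun x hx => ?_
        induction x using EReal.rec with
        | bot =>
            refine lt_of_lt_of_le (EReal.bot_lt_coe ((sStar l m - 1) * z - Lam (sStar l m - 1) l m)) ?_
            exact le_iSup (fun t : {s : ℝ // s < sStar l m} =>
              ((t.1 * z - Lam t.1 l m : ℝ) : EReal)) ⟨sStar l m - 1, by linarith⟩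
        | coe b =>
            have hb : b < sStar l m * z - Lam (sStar l m) l m := EReal.coe_lt_coe_iff.mp hx
            obtain ⟨s', hs', hgt⟩ := near_star l m hlm hm z hb
            refine lt_of_lt_of_le (EReal.coe_lt_coe_iff.2 hgt) ?_
            exact le_iSup (fun t : {s : ℝ // s < sStar l m} =>
              ((t.1 * z - Lam t.1 l m : ℝ) : EReal)) ⟨s', hs'⟩
        | top => exact absurd hx (by simp)
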